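/- Let λ₁, …, λₙ be real numbers with λ₁ + ⋯ + λₙ = 0. Then there exists a permutation σ of {1,…,n} such that for every m with 1 ≤ m ≤ n, the partial sum λ_{σ(1)} + ⋯ + λ_{σ(m)} satisfies 0 ≤ λ_{σ(1)} + ⋯ + λ_{σ(m)} ≤ 2·max_{1≤k≤n} |λ_k|. -/

import Mathlib

/-!
Greedy rearrangement. Let `M` bound the `|λₖ|` and let `S ∈ [0, 2M]` be the current partial
sum, so that the terms not yet used sum to `-S`. If `S ≤ M`, append an unused term `x ≥ 0` if there
is one (then `S + x ≤ 2M`); otherwise all unused terms are negative and any of them keeps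
`S + x ≥ -(sum of the others) ≥ 0`. If `S > M`, the unused terms have negative sum, so one of them
is negative and appending it keeps `S + x ∈ (S - M, S)`.
-/

open Set

namespace List

variable {M : ℝ}

theorem exists_mem_neg_sum_add_mem_Icc {L : List ℝ} (hL : L ≠ []) (hM : ∀ x ∈ L, |x| ≤ M)
    (hsum : -L.sum ∈ Icc 0 (2 * M)) : ∃ x ∈ L, -L.sum + x ∈ Icc 0 (2 * M) := by
  obtain ⟨a, t, rfl⟩ := exists_cons_of_ne_nil hL
  obtain ⟨h0, h2⟩ := hsum
  have hbound : ∀ x ∈ a :: t, -M ≤ x ∧ x ≤ M := fun x hx => abs_le.mp (hM x hx)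
  by_cases hsmall : -(a :: t).sum ≤ M
  · by_cases hneg : ∀ x ∈ a :: t, x < 0
    · have ht : t.sum ≤ 0 := by
        simpa using t.sum_le_card_nsmul 0 fun x hx => (hneg x (mem_cons_of_mem a hx)).le
      have ha := hneg a mem_cons_self
      rw [sum_cons] at h0 h2 ⊢
      exact ⟨a, mem_cons_self, by linarith, by linarith⟩
    · push Not at hneg
      obtain ⟨x, hx, hx0⟩ := hneg
      exact ⟨x, hx, by linarith, by linarith [(hbound x hx).2]⟩
  · obtain ⟨x, hx, hneg⟩ : ∃ x ∈ a :: t, x < 0 := by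
      by_contra! h
      exact hsmall (by linarith [sum_nonneg h])
    exact ⟨x, hx, by linarith [(hbound x hx).1], by linarith⟩

theorem exists_perm_neg_sum_add_take_sum_mem_Icc {ι : Type*} (f : ι → ℝ) (L : List ι)
    (hM : ∀ i ∈ L, |f i| ≤ M) (hsum : -(L.map f).sum ∈ Icc 0 (2 * M)) :
    ∃ L' : List ι, L' ~ L ∧ ∀ k, -(L.map f).sum + ((L'.map f).take k).sum ∈ Icc 0 (2 * M) := by
  rcases eq_or_ne L [] with rfl | hL
  · exact ⟨[], Perm.refl _, by simpa using hsum⟩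
  obtain ⟨_, hfi, hstep⟩ :=
    exists_mem_neg_sum_add_mem_Icc (by simpa using hL) (by simpa using hM) hsum
  obtain ⟨i, hi, rfl⟩ := mem_map.mp hfi
  obtain ⟨s, t, rfl⟩ := append_of_mem hi
  have hsplit : -((s ++ i :: t).map f).sum + f i = -((s ++ t).map f).sum := by
    simp only [map_append, map_cons, sum_append, sum_cons]; ring
  obtain ⟨L', hperm, hL'⟩ :=
    exists_perm_neg_sum_add_take_sum_mem_Icc f (s ++ t)
      (fun j hj => hM j (by simp at hj ⊢; tauto)) (hsplit ▸ hstep)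
  refine ⟨i :: L', (hperm.cons i).trans perm_middle.symm, fun k => ?_⟩
  cases k with
  | zero => simpa using hsum
  | succ k =>
    rw [map_cons, take_succ_cons, sum_cons, ← add_assoc, hsplit]
    exact hL' k
termination_by L.length
decreasing_by simp_all

theorem exists_ofFn_eq_of_perm_finRange {n : ℕ} {L : List (Fin n)}
    (hL : L ~ finRange n) : ∃ σ : Equiv.Perm (Fin n), ofFn σ = L := by
  have hlen : L.length = n := by simpa using hL.length_eq
  let σ : Equiv.Perm (Fin n) := (finCongr hlen.symm).trans
    ((hL.nodup_iff.mpr (nodup_finRange n)).getEquivOfForallMemList L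
      fun k => hL.mem_iff.mpr (mem_finRange k))
  exact ⟨σ, ext_getElem (by simp [hlen]) fun i _ _ => by simp [σ]⟩

end List

theorem Fin.sum_Iic_eq_sum_take_ofFn {n : ℕ} (g : Fin n → ℝ) (m : Fin n) :
    ∑ k ∈ Finset.Iic m, g k = ((List.ofFn g).take (m + 1)).sum := by
  rw [List.sum_take_ofFn]
  congr 1
  ext k
  simp only [Finset.mem_filter, Finset.mem_univ, true_and, Finset.mem_Iic, Fin.le_def]
  omega

theorem exists_perm_partial_sums_nonneg_le_two_mul_max
    (n : ℕ) (l : Fin n → ℝ) (hsum : ∑ k, l k = 0) :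
    ∃ σ : Equiv.Perm (Fin n), ∀ m : Fin n,
      0 ≤ ∑ k ∈ Finset.Iic m, l (σ k) ∧
      ∑ k ∈ Finset.Iic m, l (σ k) ≤ 2 * ⨆ k : Fin n, |l k| := by
  set M := ⨆ k : Fin n, |l k|
  have hM : ∀ k, |l k| ≤ M := le_ciSup (Set.finite_range _).bddAbove
  have hM0 : 0 ≤ M := Real.iSup_nonneg fun k => abs_nonneg (l k)
  rw [Fin.sum_univ_def] at hsum
  obtain ⟨L, hperm, hL⟩ := List.exists_perm_neg_sum_add_take_sum_mem_Icc l (List.finRange n)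
    (fun k _ => hM k) (by simpa [hsum] using hM0)
  obtain ⟨σ, rfl⟩ := List.exists_ofFn_eq_of_perm_finRange hperm
  refine ⟨σ, fun m => ?_⟩
  have := hL (m + 1)
  rwa [hsum, neg_zero, zero_add, List.map_ofFn, ← Fin.sum_Iic_eq_sum_take_ofFn] at this
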